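/- Let (A, V, ⇀, ↼, ⊳, ⊲) be a matched pair of perm algebras and ψ : V → A a deformation map, i.e., ψ(v1·v2) − ψ(v1)ψ(v2) = v1⊳ψ(v2) + ψ(v1)⊲v2 − ψ(ψ(v1)⇀v2) − ψ(v1↼ψ(v2)) for all v1, v2 ∈ V. Then V with the new product v1 ·_ψ v2 = v1·v2 + ψ(v1)⇀v2 + v1↼ψ(v2) is a perm algebra. -/

import Mathlib

/-!
The graph `{(ψ v, v)}` of a deformation map is closed under the bicrossed product, and the
product of two graph points is the graph point of their deformed product: the deformation
equation is exactly the `A`-component of this identity. Hence `(V, ·_ψ)` is isomorphic to a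
subalgebra of the perm algebra `A ⋈ V`, and both perm identities descend to it.
-/

/-- The bicrossed-product multiplication on `A × V` attached to `(⇀, ↼, ⊳, ⊲)`
(here `l = ⇀`, `r = ↼`, `s = ⊳`, `t = ⊲`):
`(a₁,v₁)(a₂,v₂) = (a₁a₂ + v₁⊳a₂ + a₁⊲v₂, v₁·v₂ + a₁⇀v₂ + v₁↼a₂)`. -/
def bicrossedMul {k A V : Type*} [Field k] [AddCommGroup A] [Module k A]
    [AddCommGroup V] [Module k V]
    (mulA : A →ₗ[k] A →ₗ[k] A) (mulV : V →ₗ[k] V →ₗ[k] V)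
    (l : A →ₗ[k] V →ₗ[k] V) (r : V →ₗ[k] A →ₗ[k] V)
    (s : V →ₗ[k] A →ₗ[k] A) (t : A →ₗ[k] V →ₗ[k] A) :
    A × V → A × V → A × V :=
  fun p q =>
    (mulA p.1 q.1 + s p.2 q.1 + t p.1 q.2, mulV p.2 q.2 + l p.1 q.2 + r p.2 q.1)

section Deformation

variable {k A V : Type*} [Field k] [AddCommGroup A] [Module k A] [AddCommGroup V] [Module k V]

def deformedMul (mulV : V →ₗ[k] V →ₗ[k] V) (l : A →ₗ[k] V →ₗ[k] V) (r : V →ₗ[k] A →ₗ[k] V)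
    (ψ : V →ₗ[k] A) (v w : V) : V :=
  mulV v w + l (ψ v) w + r v (ψ w)

theorem bicrossedMul_graph {mulA : A →ₗ[k] A →ₗ[k] A} {mulV : V →ₗ[k] V →ₗ[k] V}
    {l : A →ₗ[k] V →ₗ[k] V} {r : V →ₗ[k] A →ₗ[k] V} {s : V →ₗ[k] A →ₗ[k] A}
    {t : A →ₗ[k] V →ₗ[k] A} {ψ : V →ₗ[k] A} {v w : V}
    (hdef : ψ (mulV v w) - mulA (ψ v) (ψ w) =
      s v (ψ w) + t (ψ v) w - ψ (l (ψ v) w) - ψ (r v (ψ w))) :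
    bicrossedMul mulA mulV l r s t (ψ v, v) (ψ w, w) =
      (ψ (deformedMul mulV l r ψ v w), deformedMul mulV l r ψ v w) := by
  refine Prod.ext ?_ rfl
  simp only [bicrossedMul, deformedMul, map_add]
  rw [sub_eq_iff_eq_add.mp hdef]
  abel

end Deformation

theorem deformation_map_perm_general {k A V : Type*} [Field k] [AddCommGroup A] [Module k A]
    [AddCommGroup V] [Module k V]
    (mulA : A →ₗ[k] A →ₗ[k] A)
    (mulV : V →ₗ[k] V →ₗ[k] V)
    (l : A →ₗ[k] V →ₗ[k] V) (r : V →ₗ[k] A →ₗ[k] V)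
    (s : V →ₗ[k] A →ₗ[k] A) (t : A →ₗ[k] V →ₗ[k] A)
    -- matched pair: the bicrossed product is a perm algebra
    (hmp : ∀ x y z : A × V,
      bicrossedMul mulA mulV l r s t (bicrossedMul mulA mulV l r s t x y) z =
        bicrossedMul mulA mulV l r s t x (bicrossedMul mulA mulV l r s t y z) ∧
      bicrossedMul mulA mulV l r s t x (bicrossedMul mulA mulV l r s t y z) =
        bicrossedMul mulA mulV l r s t x (bicrossedMul mulA mulV l r s t z y))
    (ψ : V →ₗ[k] A)
    -- deformation map condition
    (hdef : ∀ v1 v2 : V,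
      ψ (mulV v1 v2) - mulA (ψ v1) (ψ v2) =
        s v1 (ψ v2) + t (ψ v1) v2 - ψ (l (ψ v1) v2) - ψ (r v1 (ψ v2))) :
    ∀ v1 v2 v3 : V,
      (mulV (mulV v1 v2 + l (ψ v1) v2 + r v1 (ψ v2)) v3
          + l (ψ (mulV v1 v2 + l (ψ v1) v2 + r v1 (ψ v2))) v3
          + r (mulV v1 v2 + l (ψ v1) v2 + r v1 (ψ v2)) (ψ v3)) =
        (mulV v1 (mulV v2 v3 + l (ψ v2) v3 + r v2 (ψ v3))
          + l (ψ v1) (mulV v2 v3 + l (ψ v2) v3 + r v2 (ψ v3))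
          + r v1 (ψ (mulV v2 v3 + l (ψ v2) v3 + r v2 (ψ v3)))) ∧
      (mulV v1 (mulV v2 v3 + l (ψ v2) v3 + r v2 (ψ v3))
          + l (ψ v1) (mulV v2 v3 + l (ψ v2) v3 + r v2 (ψ v3))
          + r v1 (ψ (mulV v2 v3 + l (ψ v2) v3 + r v2 (ψ v3)))) =
        (mulV v1 (mulV v3 v2 + l (ψ v3) v2 + r v3 (ψ v2))
          + l (ψ v1) (mulV v3 v2 + l (ψ v3) v2 + r v3 (ψ v2))
          + r v1 (ψ (mulV v3 v2 + l (ψ v3) v2 + r v3 (ψ v2)))) := by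
  intro v1 v2 v3
  obtain ⟨hassoc, hperm⟩ := hmp (ψ v1, v1) (ψ v2, v2) (ψ v3, v3)
  simp only [bicrossedMul_graph (hdef _ _)] at hassoc hperm
  exact ⟨congrArg Prod.snd hassoc, congrArg Prod.snd hperm⟩

/-- If `(A, V, ⇀, ↼, ⊳, ⊲)` is a matched pair of perm algebras and `ψ : V → A` is a
deformation map, then `V` with the deformed product
`v₁ ·_ψ v₂ = v₁·v₂ + ψ(v₁)⇀v₂ + v₁↼ψ(v₂)` is a perm algebra. -/
theorem deformation_map_perm {k A V : Type*} [Field k] [AddCommGroup A] [Module k A]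
    [AddCommGroup V] [Module k V]
    (mulA : A →ₗ[k] A →ₗ[k] A)
    (hpA1 : ∀ x y z, mulA (mulA x y) z = mulA x (mulA y z))
    (hpA2 : ∀ x y z, mulA x (mulA y z) = mulA x (mulA z y))
    (mulV : V →ₗ[k] V →ₗ[k] V)
    (hpV1 : ∀ x y z, mulV (mulV x y) z = mulV x (mulV y z))
    (hpV2 : ∀ x y z, mulV x (mulV y z) = mulV x (mulV z y))
    (l : A →ₗ[k] V →ₗ[k] V) (r : V →ₗ[k] A →ₗ[k] V)
    (s : V →ₗ[k] A →ₗ[k] A) (t : A →ₗ[k] V →ₗ[k] A)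
    -- matched pair: the bicrossed product is a perm algebra
    (hmp : ∀ x y z : A × V,
      bicrossedMul mulA mulV l r s t (bicrossedMul mulA mulV l r s t x y) z =
        bicrossedMul mulA mulV l r s t x (bicrossedMul mulA mulV l r s t y z) ∧
      bicrossedMul mulA mulV l r s t x (bicrossedMul mulA mulV l r s t y z) =
        bicrossedMul mulA mulV l r s t x (bicrossedMul mulA mulV l r s t z y))
    (ψ : V →ₗ[k] A)
    -- deformation map condition
    (hdef : ∀ v1 v2 : V,
      ψ (mulV v1 v2) - mulA (ψ v1) (ψ v2) =
        s v1 (ψ v2) + t (ψ v1) v2 - ψ (l (ψ v1) v2) - ψ (r v1 (ψ v2))) :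
    ∀ v1 v2 v3 : V,
      (mulV (mulV v1 v2 + l (ψ v1) v2 + r v1 (ψ v2)) v3
          + l (ψ (mulV v1 v2 + l (ψ v1) v2 + r v1 (ψ v2))) v3
          + r (mulV v1 v2 + l (ψ v1) v2 + r v1 (ψ v2)) (ψ v3)) =
        (mulV v1 (mulV v2 v3 + l (ψ v2) v3 + r v2 (ψ v3))
          + l (ψ v1) (mulV v2 v3 + l (ψ v2) v3 + r v2 (ψ v3))
          + r v1 (ψ (mulV v2 v3 + l (ψ v2) v3 + r v2 (ψ v3)))) ∧
      (mulV v1 (mulV v2 v3 + l (ψ v2) v3 + r v2 (ψ v3))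
          + l (ψ v1) (mulV v2 v3 + l (ψ v2) v3 + r v2 (ψ v3))
          + r v1 (ψ (mulV v2 v3 + l (ψ v2) v3 + r v2 (ψ v3)))) =
        (mulV v1 (mulV v3 v2 + l (ψ v3) v2 + r v3 (ψ v2))
          + l (ψ v1) (mulV v3 v2 + l (ψ v3) v2 + r v3 (ψ v2))
          + r v1 (ψ (mulV v3 v2 + l (ψ v3) v2 + r v3 (ψ v2)))) :=
  deformation_map_perm_general mulA mulV l r s t hmp ψ hdef
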